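/- There exist constants c₁, c₂ > 0 such that the following holds. For every finite simple graph G on n ≥ 2 vertices and every integer λ with 1 ≤ λ ≤ log₂ n, G admits a weak (λ, ⌈c₁·n^{1/λ}·(log₂ n)²⌉)-network decomposition with cluster distance 1 and congestion ⌈c₂·log₂ n⌉. -/

import Mathlib

/-!
Ball carving. Put `g = n ^ (1 / L)` and `ε = 1 / (2 g)`. Around a vertex `v` of the set `W` of
still uncovered vertices, the balls `B_r` of `G[W]` cannot grow by a factor `1 + ε` at every radius
up to `R = ⌈4 g ln n⌉`, because `(1 + ε) ^ (R + 1) > n`. Cut out `B_r` for the first `r` with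
`|B_(r+1)| < (1 + ε) |B_r|` and discard the shell `B_(r+1) \ B_r`; repeating this in `W \ B_(r+1)`
yields clusters of strong radius at most `R` that are pairwise non-adjacent, while at most an
`ε`-fraction of `W` is discarded. Each such round is one colour class; the discarded vertices are
carved in the next round. After `L` rounds fewer than `ε ^ L n = 2 ^ (-L)` vertices remain, i.e.
none. Taking the induced subgraphs of the (disjoint) clusters as Steiner trees gives Steiner
radius `2 R = O(n ^ (1 / L) log n)` and congestion `1`.
-/

open SimpleGraph

/-- `FarApart G k A B` : the `G`-distance between the vertex sets `A` and `B` is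
strictly greater than `k`, i.e. every walk between a vertex of `A` and a vertex of `B`
has length greater than `k`. -/
def FarApart {V : Type} (G : SimpleGraph V) (k : ℕ) (A B : Set V) : Prop :=
  ∀ u ∈ A, ∀ v ∈ B, ∀ p : G.Walk u v, k < p.length

/-- A cluster collection with Steiner radius `β` and congestion `κ` in `G`:
pairwise disjoint clusters, each contained in an associated connected Steiner subgraph
in which any two vertices are joined by a path of length at most `β`, and every edge of
`G` lies in at most `κ` of the Steiner subgraphs. -/
structure ClusterCollection {V : Type} (G : SimpleGraph V) (β κ : ℕ) where
  p : ℕ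
  cluster : Fin p → Set V
  tree : Fin p → G.Subgraph
  disjoint : ∀ i j, i ≠ j → Disjoint (cluster i) (cluster j)
  subset_tree : ∀ i, cluster i ⊆ (tree i).verts
  connected : ∀ i, ((tree i).coe).Preconnected
  radius : ∀ i, ∀ u v : (tree i).verts, ∃ w : ((tree i).coe).Walk u v, w.length ≤ β
  congestion : ∀ e ∈ G.edgeSet, {i : Fin p | e ∈ (tree i).edgeSet}.ncard ≤ κ

/-- A weak `(C, β)`-network decomposition with cluster distance `k` and congestion `κ`:
a partition of the vertices into `C` cluster collections (color classes), each with
Steiner radius `β` and congestion `κ`, such that any two distinct clusters of the same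
color class are at `G`-distance strictly greater than `k`. -/
structure NetworkDecomposition {V : Type} (G : SimpleGraph V) (C β κ k : ℕ) where
  coll : Fin C → ClusterCollection G β κ
  cover : ∀ v : V, ∃! ci : (c : Fin C) × Fin (coll c).p, v ∈ (coll ci.1).cluster ci.2
  sep : ∀ c : Fin C, ∀ i j : Fin (coll c).p, i ≠ j →
    FarApart G k ((coll c).cluster i) ((coll c).cluster j)


namespace SimpleGraph

theorem exists_walk_length_le_two_mul_of_radius_le {α : Type*} {H : SimpleGraph α} {R : ℕ}
    (h : H.radius ≤ R) (u v : α) : ∃ p : H.Walk u v, p.length ≤ 2 * R := by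
  have hR : H.edist u v ≤ (2 * R : ℕ) := by
    push_cast
    exact edist_le_ediam.trans (ediam_le_two_mul_radius.trans (by gcongr))
  obtain ⟨p, hp⟩ := exists_walk_of_edist_ne_top (hR.trans_lt (ENat.natCast_lt_top _)).ne
  exact ⟨p, by exact_mod_cast hp ▸ hR⟩

variable {V : Type*}

@[simp]
theorem Walk.length_induce {G : SimpleGraph V} {s : Set V} {u v : V} (p : G.Walk u v)
    (hp : ∀ x ∈ p.support, x ∈ s) :
    (p.induce s hp).length = p.length := by
  induction p with
  | nil => rfl
  | cons _ p ih => simp [ih]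

variable (G : SimpleGraph V)

def inducedBall (W : Set V) (v : V) (r : ℕ) : Set V :=
  {u | ∃ p : G.Walk v u, p.length ≤ r ∧ ∀ x ∈ p.support, x ∈ W}

variable {G}

theorem inducedBall_subset (W : Set V) (v : V) (r : ℕ) : G.inducedBall W v r ⊆ W :=
  fun _ ⟨p, _, hp⟩ => hp _ p.end_mem_support

theorem inducedBall_mono (W : Set V) (v : V) {r s : ℕ} (hrs : r ≤ s) :
    G.inducedBall W v r ⊆ G.inducedBall W v s :=
  fun _ ⟨p, hpr, hp⟩ => ⟨p, hpr.trans hrs, hp⟩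

theorem mem_inducedBall_self {W : Set V} {v : V} (hv : v ∈ W) (r : ℕ) :
    v ∈ G.inducedBall W v r :=
  ⟨Walk.nil, Nat.zero_le r, by simpa using hv⟩

theorem mem_inducedBall_succ_of_adj {W : Set V} {v x u : V} {r : ℕ}
    (hx : x ∈ G.inducedBall W v r) (hu : u ∈ W) (hxu : G.Adj x u) :
    u ∈ G.inducedBall W v (r + 1) := by
  obtain ⟨p, hpr, hp⟩ := hx
  refine ⟨p.concat hxu, by simpa using hpr, fun y hy => ?_⟩
  rw [Walk.support_concat, List.mem_append, List.mem_singleton] at hy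
  exact hy.elim (hp y) fun h => h ▸ hu

theorem radius_induce_inducedBall_le {W : Set V} {v : V} (hv : v ∈ W) (r : ℕ) :
    (G.induce (G.inducedBall W v r)).radius ≤ r := by
  classical
  refine radius_le_eccent.trans ((eccent_le_iff (⟨v, mem_inducedBall_self hv r⟩ : _) _).2 ?_)
  rintro ⟨u, p, hpr, hpW⟩
  -- an initial segment of `p` stays in the ball, so all of `p` does
  have hp : ∀ x ∈ p.support, x ∈ G.inducedBall W v r := fun x hx =>
    ⟨p.takeUntil x hx, (p.length_takeUntil_le_length hx).trans hpr,
      fun y hy => hpW y (p.support_takeUntil_subset_support hx hy)⟩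
  exact (edist_le (p.induce _ hp)).trans (by exact_mod_cast (Walk.length_induce p hp).symm ▸ hpr)

end SimpleGraph

section

variable {V : Type} {G : SimpleGraph V} {k : ℕ} {A B : Set V}

theorem FarApart.disjoint (h : FarApart G k A B) : Disjoint A B :=
  Set.disjoint_left.2 fun a ha hb => absurd (h a ha a hb Walk.nil) (Nat.not_lt_zero k)

theorem FarApart.symm (h : FarApart G k A B) : FarApart G k B A :=
  fun v hv u hu p => by simpa using h u hu v hv p.reverse

instance : Std.Symm (FarApart G k) := ⟨fun _ _ => FarApart.symm⟩

theorem farApart_one_iff :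
    FarApart G 1 A B ↔ Disjoint A B ∧ ∀ a ∈ A, ∀ b ∈ B, ¬ G.Adj a b := by
  refine ⟨fun h => ⟨h.disjoint, fun a ha b hb hab => ?_⟩, ?_⟩
  · exact absurd (h a ha b hb hab.toWalk) (by simp)
  · rintro ⟨hAB, hadj⟩ u hu v hv (_ | ⟨huw, _ | ⟨_, _⟩⟩)
    · exact absurd hv (Set.disjoint_left.1 hAB hu)
    · exact absurd huw (hadj u hu v hv)
    · simp

end

theorem pow_le_of_forall_mul_le {a : ℕ → ℝ} {q : ℝ} (hq : 0 ≤ q) (h0 : 1 ≤ a 0)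
    {n : ℕ} (h : ∀ r < n, q * a r ≤ a (r + 1)) : q ^ n ≤ a n := by
  induction n with
  | zero => simpa using h0
  | succ n ih =>
    calc q ^ (n + 1) = q * q ^ n := pow_succ' q n
      _ ≤ q * a n := by gcongr; exact ih fun r hr => h r (by omega)
      _ ≤ a (n + 1) := h n n.lt_succ_self

namespace SimpleGraph

variable {V : Type} {G : SimpleGraph V}

structure IsColoredClustering (G : SimpleGraph V) (R k : ℕ) (U : Set V)
    (cl : ℕ → List (Set V)) : Prop where
  subset : ∀ c, ∀ S ∈ cl c, S ⊆ U
  radius_le : ∀ c, ∀ S ∈ cl c, (G.induce S).radius ≤ R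
  farApart : ∀ c, (cl c).Pairwise (FarApart G 1)
  disjoint : ∀ {c c'}, c ≠ c' → ∀ S ∈ cl c, ∀ T ∈ cl c', Disjoint S T
  cover : ∀ v ∈ U, ∃ c < k, ∃ S ∈ cl c, v ∈ S

variable [Fintype V]

theorem exists_inducedBall_growth_lt {ε : ℝ} (hε : 0 ≤ ε) {R : ℕ}
    (hbig : (Fintype.card V : ℝ) < (1 + ε) ^ (R + 1)) {W : Set V} {v : V} (hv : v ∈ W) :
    ∃ r ≤ R,
      ((G.inducedBall W v (r + 1)).ncard : ℝ) < (1 + ε) * (G.inducedBall W v r).ncard := by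
  by_contra! hgrowth
  have hcenter : (1 : ℝ) ≤ (G.inducedBall W v 0).ncard := by
    exact_mod_cast ((Set.ncard_pos).2 ⟨v, mem_inducedBall_self hv 0⟩ :)
  have hpow := pow_le_of_forall_mul_le (a := fun r => ((G.inducedBall W v r).ncard : ℝ))
    (n := R + 1) (by linarith) hcenter fun r hr => hgrowth r (by omega)
  have hcard : ((G.inducedBall W v (R + 1)).ncard : ℝ) ≤ Fintype.card V := by
    exact_mod_cast Nat.card_eq_fintype_card (α := V) ▸ Set.ncard_le_card _
  linarith

theorem exists_ball_carving {ε : ℝ} (hε : 0 ≤ ε) {R : ℕ}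
    (hbig : (Fintype.card V : ℝ) < (1 + ε) ^ (R + 1)) (W : Set V) :
    ∃ l : List (Set V), (∀ S ∈ l, S ⊆ W ∧ (G.induce S).radius ≤ R) ∧
      l.Pairwise (FarApart G 1) ∧ ((W \ ⋃ S ∈ l, S).ncard : ℝ) ≤ ε * W.ncard := by
  induction hn : W.ncard using Nat.strong_induction_on generalizing W with
  | _ n ih =>
    subst hn
    rcases W.eq_empty_or_nonempty with rfl | ⟨v, hv⟩
    · exact ⟨[], by simp, List.Pairwise.nil, by simp⟩
    obtain ⟨r, hr, hgrowth⟩ := exists_inducedBall_growth_lt hε hbig hv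
    set B := G.inducedBall W v r
    set B' := G.inducedBall W v (r + 1)
    have hBB' : B ⊆ B' := inducedBall_mono W v r.le_succ
    have hB'W : B' ⊆ W := inducedBall_subset W v (r + 1)
    have hlt : (W \ B').ncard < W.ncard :=
      Set.ncard_lt_ncard (Set.sdiff_ssubset_left_iff.2 ⟨v, hv, mem_inducedBall_self hv _⟩)
    obtain ⟨l, hlW, hl, hrest⟩ := ih _ hlt (W \ B') rfl
    refine ⟨B :: l, ?_, ?_, ?_⟩
    · simp only [List.mem_cons, forall_eq_or_imp]
      exact ⟨⟨inducedBall_subset W v r,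
          (radius_induce_inducedBall_le hv r).trans (by exact_mod_cast hr)⟩,
        fun S hS => ⟨(hlW S hS).1.trans Set.sdiff_subset, (hlW S hS).2⟩⟩
    · refine List.pairwise_cons.2 ⟨fun T hT => farApart_one_iff.2 ⟨?_, ?_⟩, hl⟩
      · exact Set.disjoint_of_subset hBB' ((hlW T hT).1.trans (Set.sdiff_subset_compl W B'))
          disjoint_compl_right
      · intro x hx y hy hxy
        exact ((hlW T hT).1 hy).2 (mem_inducedBall_succ_of_adj hx ((hlW T hT).1 hy).1 hxy)
    · have hrest_sub : W \ ⋃ S ∈ B :: l, S ⊆ (B' \ B) ∪ ((W \ B') \ ⋃ S ∈ l, S) := by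
        intro x ⟨hxW, hx⟩
        simp only [List.mem_cons, Set.mem_iUnion, exists_prop, not_exists, not_and] at hx
        by_cases hxB' : x ∈ B'
        · exact Or.inl ⟨hxB', fun hxB => hx B (Or.inl rfl) hxB⟩
        · exact Or.inr ⟨⟨hxW, hxB'⟩, by simpa using fun S hS => hx S (Or.inr hS)⟩
      have hshell : ((B' \ B).ncard : ℝ) + B.ncard = B'.ncard := by
        exact_mod_cast Set.ncard_sdiff_add_ncard_of_subset hBB'
      have hsplit : (B.ncard : ℝ) + (W \ B').ncard ≤ W.ncard := by
        have := Set.ncard_le_ncard (Set.union_subset (hBB'.trans hB'W) (Set.sdiff_subset (t := B')))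
        rw [Set.ncard_union_eq (Set.disjoint_of_subset_left hBB' Set.disjoint_sdiff_right)] at this
        exact_mod_cast this
      calc ((W \ ⋃ S ∈ B :: l, S).ncard : ℝ)
          ≤ ((B' \ B).ncard : ℝ) + ((W \ B') \ ⋃ S ∈ l, S).ncard := by
            exact_mod_cast (Set.ncard_le_ncard hrest_sub).trans (Set.ncard_union_le _ _)
        _ ≤ ε * W.ncard := by nlinarith [mul_le_mul_of_nonneg_left hsplit hε]


theorem exists_isColoredClustering {ε : ℝ} (hε : 0 ≤ ε) {R : ℕ}
    (hbig : (Fintype.card V : ℝ) < (1 + ε) ^ (R + 1)) (k : ℕ) (U : Set V)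
    (hsmall : ε ^ k * U.ncard < 1) : ∃ cl, G.IsColoredClustering R k U cl := by
  induction k generalizing U with
  | zero =>
    have hU : U = ∅ := (Set.ncard_eq_zero).1 <| Nat.lt_one_iff.1 <| by
      exact_mod_cast (by simpa using hsmall : (U.ncard : ℝ) < 1)
    subst hU
    exact ⟨fun _ => [], ⟨by simp, by simp, by simp, by simp, by simp⟩⟩
  | succ k ih =>
    obtain ⟨bs, hbs, hbs_far, hrest⟩ := exists_ball_carving (G := G) hε hbig U
    set D := U \ ⋃ S ∈ bs, S
    obtain ⟨cl, hcl⟩ := ih D (by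
      calc ε ^ k * D.ncard ≤ ε ^ k * (ε * U.ncard) := by gcongr
        _ = ε ^ (k + 1) * U.ncard := by ring
        _ < 1 := hsmall)
    have hbs_D : ∀ S ∈ bs, ∀ T ⊆ D, Disjoint S T := fun S hS T hT =>
      Set.disjoint_left.2 fun _ hxS hxT => (hT hxT).2 (Set.mem_iUnion₂.2 ⟨S, hS, hxS⟩)
    refine ⟨fun | 0 => bs | c + 1 => cl c, ⟨?_, ?_, ?_, ?_, ?_⟩⟩
    · rintro (_ | c) S hS
      exacts [(hbs S hS).1, (hcl.subset c S hS).trans Set.sdiff_subset]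
    · rintro (_ | c) S hS
      exacts [(hbs S hS).2, hcl.radius_le c S hS]
    · rintro (_ | c)
      exacts [hbs_far, hcl.farApart c]
    · rintro (_ | c) (_ | c') hcc' S hS T hT
      · exact absurd rfl hcc'
      · exact hbs_D S hS T (hcl.subset c' T hT)
      · exact (hbs_D T hT S (hcl.subset c S hS)).symm
      · exact hcl.disjoint (by omega) S hS T hT
    · intro v hv
      by_cases hvD : v ∈ D
      · obtain ⟨c, hc, S, hS, hvS⟩ := hcl.cover v hvD
        exact ⟨c + 1, by omega, S, hS, hvS⟩
      · obtain ⟨S, hS, hvS⟩ : ∃ S ∈ bs, v ∈ S := by simpa [D, hv] using hvD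
        exact ⟨0, by omega, S, hS, hvS⟩

end SimpleGraph

theorem List.Pairwise.rel_get_of_ne {α : Type*} {r : α → α → Prop} [Std.Symm r]
    {l : List α} (h : l.Pairwise r) {i j : Fin l.length} (hij : i ≠ j) :
    r (l.get i) (l.get j) :=
  hij.lt_or_gt.elim h.rel_get_of_lt fun hji => Std.Symm.symm _ _ (h.rel_get_of_lt hji)

section

variable {V : Type} {G : SimpleGraph V}

theorem exists_walk_coe_induce_top_length_le {R : ℕ} {S : Set V} (h : (G.induce S).radius ≤ R)
    (u v : ((⊤ : G.Subgraph).induce S).verts) :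
    ∃ w : ((⊤ : G.Subgraph).induce S).coe.Walk u v, w.length ≤ 2 * R :=
  induce_eq_coe_induce_top S ▸ exists_walk_length_le_two_mul_of_radius_le h u v

def ClusterCollection.ofList {R : ℕ} (l : List (Set V))
    (hrad : ∀ S ∈ l, (G.induce S).radius ≤ R) (hfar : l.Pairwise (FarApart G 1)) :
    ClusterCollection G (2 * R) 1 where
  p := l.length
  cluster := l.get
  tree i := (⊤ : G.Subgraph).induce (l.get i)
  disjoint _ _ hij := (hfar.rel_get_of_ne hij).disjoint
  subset_tree _ := subset_rfl
  connected i u v :=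
    (exists_walk_coe_induce_top_length_le (hrad _ (l.get_mem i)) u v).choose.reachable
  radius i := exists_walk_coe_induce_top_length_le (hrad _ (l.get_mem i))
  congestion e _ := by
    refine (Set.ncard_le_one).2 fun i hi j hj => by_contra fun hij => ?_
    induction e using Sym2.ind with
    | _ a b =>
      exact Set.disjoint_left.1 (hfar.rel_get_of_ne hij).disjoint
        (Subgraph.mem_verts_of_mem_edge hi (Sym2.mem_mk_left a b))
        (Subgraph.mem_verts_of_mem_edge hj (Sym2.mem_mk_left a b))

def ClusterCollection.mono {β β' κ κ' : ℕ} (hβ : β ≤ β') (hκ : κ ≤ κ')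
    (C : ClusterCollection G β κ) : ClusterCollection G β' κ' :=
  { C with
    radius := fun i u v => (C.radius i u v).imp fun _ hw => hw.trans hβ
    congestion := fun e he => (C.congestion e he).trans hκ }

def NetworkDecomposition.mono {C β β' κ κ' k : ℕ} (hβ : β ≤ β') (hκ : κ ≤ κ')
    (D : NetworkDecomposition G C β κ k) : NetworkDecomposition G C β' κ' k where
  coll c := (D.coll c).mono hβ hκ
  cover := D.cover
  sep := D.sep

def NetworkDecomposition.ofIsColoredClustering {R L : ℕ} {cl : ℕ → List (Set V)}
    (h : G.IsColoredClustering R L Set.univ cl) : NetworkDecomposition G L (2 * R) 1 1 where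
  coll c := .ofList (cl c) (h.radius_le c) (h.farApart c)
  cover v := by
    obtain ⟨c, hc, S, hS, hvS⟩ := h.cover v trivial
    obtain ⟨i, rfl⟩ := List.get_of_mem hS
    refine ⟨⟨⟨c, hc⟩, i⟩, hvS, ?_⟩
    rintro ⟨c', i'⟩ hv'
    obtain rfl : c' = ⟨c, hc⟩ := Fin.ext <| by_contra fun hcc' =>
      Set.disjoint_left.1 (h.disjoint hcc' _ (List.get_mem _ i') _ (List.get_mem _ i)) hv' hvS
    obtain rfl : i' = i := by_contra fun hii' => Set.disjoint_left.1
      ((h.farApart c).rel_get_of_ne hii').disjoint hv' hvS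
    rfl
  sep c _ _ hij := (h.farApart c).rel_get_of_ne hij

theorem SimpleGraph.nonempty_networkDecomposition [Fintype V] (G : SimpleGraph V) {ε : ℝ}
    (hε : 0 ≤ ε) {L R : ℕ} (hsmall : ε ^ L * Fintype.card V < 1)
    (hbig : (Fintype.card V : ℝ) < (1 + ε) ^ (R + 1)) :
    Nonempty (NetworkDecomposition G L (2 * R) 1 1) := by
  obtain ⟨cl, hcl⟩ := G.exists_isColoredClustering hε hbig L Set.univ
    (by rwa [Set.ncard_univ, Nat.card_eq_fintype_card])
  exact ⟨.ofIsColoredClustering hcl⟩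

end

theorem lt_one_add_pow_succ_of_le {ε N : ℝ} (hε0 : 0 < ε) (hε1 : ε ≤ 1) (hN : 0 < N)
    {R : ℕ} (hR : 2 * Real.log N / ε ≤ R) : N < (1 + ε) ^ (R + 1) := by
  have hlog : ε / 2 ≤ Real.log (1 + ε) := by
    calc ε / 2 ≤ ε / (1 + ε) := div_le_div_of_nonneg_left hε0.le (by linarith) (by linarith)
      _ = 1 - (1 + ε)⁻¹ := by field_simp; ring
      _ ≤ Real.log (1 + ε) := Real.one_sub_inv_le_log_of_pos (by linarith)
  rw [← Real.log_lt_log_iff hN (by positivity), Real.log_pow]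
  rw [div_le_iff₀ hε0] at hR
  have hpos : 0 < Real.log (1 + ε) := Real.log_pos (by linarith)
  push_cast
  nlinarith

theorem inv_two_mul_rpow_pow_mul_lt_one {N : ℝ} (hN : 0 < N) {L : ℕ} (hL : 1 ≤ L) :
    (2 * N ^ ((1 : ℝ) / L))⁻¹ ^ L * N < 1 := by
  rw [inv_pow, mul_pow, one_div, Real.rpow_inv_natCast_pow hN.le (by omega), mul_inv,
    mul_assoc, inv_mul_cancel₀ hN.ne', mul_one]
  exact inv_lt_one_of_one_lt₀ (one_lt_pow₀ one_lt_two (by omega))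

theorem two_mul_ceil_le_ceil {g N : ℝ} (hg : 1 ≤ g) (hN : 2 ≤ N) :
    2 * ⌈4 * g * Real.log N⌉₊ ≤ ⌈10 * g * Real.logb 2 N ^ 2⌉₊ := by
  have hℓ : 1 ≤ Real.logb 2 N := by
    rwa [Real.le_logb_iff_rpow_le one_lt_two (by linarith), Real.rpow_one]
  have hlog : Real.log N ≤ Real.logb 2 N := by
    rw [← Real.log_div_log, le_div_iff₀ (Real.log_pos one_lt_two)]
    nlinarith [Real.log_two_lt_d9, Real.log_nonneg (show (1 : ℝ) ≤ N by linarith)]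
  have hceil := Nat.ceil_lt_add_one (show 0 ≤ 4 * g * Real.log N by
    have := Real.log_nonneg (show (1 : ℝ) ≤ N by linarith); positivity)
  refine Nat.cast_le.1 (le_trans ?_ (Nat.le_ceil _))
  push_cast
  nlinarith [mul_le_mul_of_nonneg_left hlog (show 0 ≤ g by linarith)]

theorem statement1 :
    ∃ c₁ c₂ : ℝ, 0 < c₁ ∧ 0 < c₂ ∧
      ∀ (V : Type) [Fintype V] (G : SimpleGraph V),
        2 ≤ Fintype.card V →
        ∀ L : ℕ, 1 ≤ L → (L : ℝ) ≤ Real.logb 2 (Fintype.card V) →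
          Nonempty (NetworkDecomposition G L
            ⌈c₁ * (Fintype.card V : ℝ) ^ ((1 : ℝ) / L) *
              (Real.logb 2 (Fintype.card V)) ^ 2⌉₊
            ⌈c₂ * Real.logb 2 (Fintype.card V)⌉₊
            1) := by
  refine ⟨10, 1, by norm_num, by norm_num, fun V _ G hcard L hL _ => ?_⟩
  have hN : (2 : ℝ) ≤ Fintype.card V := by exact_mod_cast hcard
  set N : ℝ := (Fintype.card V : ℝ)
  set g := N ^ ((1 : ℝ) / L)
  have hg : 1 ≤ g := Real.one_le_rpow (by linarith) (by positivity)
  have hbig : N < (1 + (2 * g)⁻¹) ^ (⌈4 * g * Real.log N⌉₊ + 1) :=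
    lt_one_add_pow_succ_of_le (by positivity) (inv_le_one_of_one_le₀ (by linarith)) (by linarith)
      (le_of_eq_of_le (by field_simp; ring) (Nat.le_ceil _))
  have hκ : 1 ≤ ⌈1 * Real.logb 2 N⌉₊ := Nat.one_le_iff_ne_zero.2 <| by
    simp [Real.logb_pos one_lt_two (by linarith : (1 : ℝ) < N)]
  exact (G.nonempty_networkDecomposition (by positivity)
    (inv_two_mul_rpow_pow_mul_lt_one (by linarith) hL) hbig).map
      (NetworkDecomposition.mono (two_mul_ceil_le_ceil hg hN) hκ)
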